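/- For x > 0, the subdifferential of f_δ at (x,y,z) is the singleton {(-(|y|² + δ²z²)/(2x²), y/x, δ²z/x)}; at (0,0,0) the subdifferential of f_δ equals B_δ. -/

import Mathlib

open Classical

/-- The function `f_δ`, here valued in the extended reals `EReal` (it never takes the value
`-∞`, and is `+∞` outside `{x > 0} ∪ {(0,0,0)}`). -/
noncomputable def fEdelta (δ : ℝ) (d : ℕ) (p : ℝ × EuclideanSpace ℝ (Fin d) × ℝ) : EReal :=
  if 0 < p.1 then (((‖p.2.1‖ ^ 2 + δ ^ 2 * p.2.2 ^ 2) / (2 * p.1) : ℝ) : EReal)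
  else if p = 0 then 0 else ⊤

/-- The Euclidean pairing on `ℝ × ℝ^d × ℝ`. -/
noncomputable def pairing {d : ℕ} (q p : ℝ × EuclideanSpace ℝ (Fin d) × ℝ) : ℝ :=
  q.1 * p.1 + (inner ℝ q.2.1 p.2.1 : ℝ) + q.2.2 * p.2.2

/-- The subdifferential of `f_δ` at `p`: all `q` with `f(p') ≥ f(p) + ⟨q, p' - p⟩` for all `p'`. -/
noncomputable def subdiff (δ : ℝ) (d : ℕ) (p : ℝ × EuclideanSpace ℝ (Fin d) × ℝ) :
    Set (ℝ × EuclideanSpace ℝ (Fin d) × ℝ) :=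
  {q | ∀ p', fEdelta δ d p + ((pairing q (p' - p) : ℝ) : EReal) ≤ fEdelta δ d p'}

/-- The convex set `B_δ = {(a,b,c) : a + (|b|² + c²/δ²)/2 ≤ 0}`. -/
def Bdelta (δ : ℝ) (d : ℕ) : Set (ℝ × EuclideanSpace ℝ (Fin d) × ℝ) :=
  {q | q.1 + (1 / 2) * (‖q.2.1‖ ^ 2 + q.2.2 ^ 2 / δ ^ 2) ≤ 0}

/-!
On `{x > 0}`, `f_δ(x, y, z) = ‖y‖²/(2x) + (δz)²/(2x)` is a sum of two perspectives of `‖·‖²/2`,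
hence convex and differentiable: the tangent inequality reduces to
`‖x y' - x' y‖² ≥ 0`, and a subgradient at a point of differentiability must be the gradient,
as it makes `t ↦ f(p + t v) - t ⟨q, v⟩` minimal at `t = 0`.
At the origin, where `f_δ` vanishes, `q = (a, b, c)` is a subgradient iff `⟨q, p⟩ ≤ f_δ(p)` for
all `p = (x, y, z)` with `x > 0`. Testing `p = (1, b, c/δ²)` gives `q ∈ B_δ`; conversely Young's
inequality `2⟨b, y⟩ ≤ x‖b‖² + ‖y‖²/x` (and `2 c z ≤ x c²/δ² + δ² z²/x`) gives
`⟨q, p⟩ ≤ x (a + (‖b‖² + c²/δ²)/2) + f_δ(p) ≤ f_δ(p)`.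
-/

open Filter Topology RealInnerProductSpace

noncomputable def quadOverLin (δ : ℝ) {d : ℕ} (p : ℝ × EuclideanSpace ℝ (Fin d) × ℝ) : ℝ :=
  (‖p.2.1‖ ^ 2 + δ ^ 2 * p.2.2 ^ 2) / (2 * p.1)

noncomputable def quadOverLinGrad (δ : ℝ) {d : ℕ} (p : ℝ × EuclideanSpace ℝ (Fin d) × ℝ) :
    ℝ × EuclideanSpace ℝ (Fin d) × ℝ :=
  (-(‖p.2.1‖ ^ 2 + δ ^ 2 * p.2.2 ^ 2) / (2 * p.1 ^ 2), (1 / p.1) • p.2.1, δ ^ 2 * p.2.2 / p.1)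

theorem two_mul_mul_le_mul_sq_add_sq_div {t : ℝ} (ht : 0 < t) (u v : ℝ) :
    2 * u * v ≤ t * u ^ 2 + v ^ 2 / t := by
  rw [← sub_nonneg]
  have key : t * u ^ 2 + v ^ 2 / t - 2 * u * v = (t * u - v) ^ 2 / t := by
    field_simp
    ring
  rw [key]
  positivity

theorem perspective_sq_norm_tangent_le {F : Type*} [NormedAddCommGroup F]
    [InnerProductSpace ℝ F] {x x' : ℝ} (hx : 0 < x) (hx' : 0 < x') (y y' : F) :
    ‖y‖ ^ 2 / (2 * x) - ‖y‖ ^ 2 / (2 * x ^ 2) * (x' - x) + ⟪(1 / x) • y, y' - y⟫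
      ≤ ‖y'‖ ^ 2 / (2 * x') := by
  have hsq : 0 ≤ ‖x • y' - x' • y‖ ^ 2 := by positivity
  rw [norm_sub_sq_real, norm_smul, norm_smul, inner_smul_left, inner_smul_right,
    Real.norm_of_nonneg hx.le, Real.norm_of_nonneg hx'.le] at hsq
  rw [inner_smul_left, conj_trivial, inner_sub_right, real_inner_self_eq_norm_sq,
    real_inner_comm, ← sub_nonneg]
  have key : ‖y'‖ ^ 2 / (2 * x') - (‖y‖ ^ 2 / (2 * x) - ‖y‖ ^ 2 / (2 * x ^ 2) * (x' - x)
      + 1 / x * (⟪y', y⟫ - ‖y‖ ^ 2))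
      = ((x * ‖y'‖) ^ 2 - 2 * (x * (x' * ⟪y', y⟫)) + (x' * ‖y‖) ^ 2) / (2 * x ^ 2 * x') := by
    field_simp
    ring
  rw [key]
  positivity

section

variable {δ : ℝ} {d : ℕ}

theorem fEdelta_of_pos {p : ℝ × EuclideanSpace ℝ (Fin d) × ℝ} (hp : 0 < p.1) :
    fEdelta δ d p = quadOverLin δ p := by
  simp [fEdelta, hp, quadOverLin]

theorem fEdelta_zero : fEdelta δ d 0 = 0 := by
  simp [fEdelta]

theorem fEdelta_of_not_pos {p : ℝ × EuclideanSpace ℝ (Fin d) × ℝ} (hp : ¬0 < p.1) (h0 : p ≠ 0) :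
    fEdelta δ d p = ⊤ := by
  simp [fEdelta, hp, h0]

theorem pairing_smul_right (q p : ℝ × EuclideanSpace ℝ (Fin d) × ℝ) (t : ℝ) :
    pairing q (t • p) = t * pairing q p := by
  simp only [pairing, Prod.smul_fst, Prod.smul_snd, smul_eq_mul, inner_smul_right]
  ring

theorem pairing_zero_right (q : ℝ × EuclideanSpace ℝ (Fin d) × ℝ) : pairing q 0 = 0 := by
  simp [pairing]

theorem forall_pairing_eq_iff {q q' : ℝ × EuclideanSpace ℝ (Fin d) × ℝ} :
    (∀ v, pairing q v = pairing q' v) ↔ q = q' := by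
  refine ⟨fun h => ?_, fun h _ => h ▸ rfl⟩
  obtain ⟨a, b, c⟩ := q
  obtain ⟨a', b', c'⟩ := q'
  have ha := h (1, 0, 0)
  have hb := fun w => h (0, w, 0)
  have hc := h (0, 0, 1)
  simp only [pairing, mul_one, mul_zero, inner_zero_right, add_zero, zero_add] at ha hb hc
  rw [ha, ext_inner_right ℝ hb, hc]

theorem mem_subdiff_iff {p q : ℝ × EuclideanSpace ℝ (Fin d) × ℝ} {r : ℝ}
    (hr : fEdelta δ d p = r) :
    q ∈ subdiff δ d p ↔
      (∀ p', 0 < p'.1 → r + pairing q (p' - p) ≤ quadOverLin δ p') ∧ r + pairing q (-p) ≤ 0 := by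
  simp only [subdiff, Set.mem_ofPred_eq, hr]
  refine ⟨fun h => ⟨fun p' hp' => ?_, ?_⟩, fun ⟨hpos, hzero⟩ p' => ?_⟩
  · have := h p'
    rwa [fEdelta_of_pos hp', ← EReal.coe_add, EReal.coe_le_coe_iff] at this
  · have := h 0
    rwa [fEdelta_zero, zero_sub, ← EReal.coe_add, EReal.coe_nonpos] at this
  · by_cases hp' : 0 < p'.1
    · rw [fEdelta_of_pos hp', ← EReal.coe_add, EReal.coe_le_coe_iff]
      exact hpos p' hp'
    by_cases h0 : p' = 0
    · rw [h0, fEdelta_zero, zero_sub, ← EReal.coe_add, EReal.coe_nonpos]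
      exact hzero
    · rw [fEdelta_of_not_pos hp' h0]
      exact le_top

theorem eq_of_hasDerivAt_of_eventually_add_mul_le {g : ℝ → ℝ} {g' s : ℝ}
    (hg : HasDerivAt g g' 0) (h : ∀ᶠ t in 𝓝 0, g 0 + t * s ≤ g t) : s = g' := by
  have hmin : IsLocalMin (fun t => g t - t * s) 0 :=
    h.mono fun t ht => by simp only [zero_mul, sub_zero]; linarith
  have := hmin.hasDerivAt_eq_zero (hg.sub ((hasDerivAt_id 0).mul_const s))
  simp only [one_mul] at this
  linarith

theorem hasDerivAt_quadOverLin_line {p : ℝ × EuclideanSpace ℝ (Fin d) × ℝ} (hp : 0 < p.1)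
    (v : ℝ × EuclideanSpace ℝ (Fin d) × ℝ) :
    HasDerivAt (fun t : ℝ => quadOverLin δ (p + t • v)) (pairing (quadOverLinGrad δ p) v) 0 := by
  obtain ⟨x, y, z⟩ := p
  obtain ⟨r, w, s⟩ := v
  have hy : HasDerivAt (fun t : ℝ => y + t • w) w 0 := by
    simpa using ((hasDerivAt_id (0 : ℝ)).smul_const w).const_add y
  have hz : HasDerivAt (fun t : ℝ => z + t * s) s 0 := by
    simpa using ((hasDerivAt_id (0 : ℝ)).mul_const s).const_add z
  have hden : HasDerivAt (fun t : ℝ => 2 * (x + t * r)) (2 * r) 0 := by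
    simpa using (((hasDerivAt_id (0 : ℝ)).mul_const r).const_add x).const_mul 2
  have hfun : (fun t : ℝ => quadOverLin δ ((x, y, z) + t • (r, w, s)))
      = fun t => (‖y + t • w‖ ^ 2 + δ ^ 2 * (z + t * s) ^ 2) / (2 * (x + t * r)) := by
    funext t
    simp [quadOverLin]
  rw [hfun]
  refine (((hy.norm_sq).add ((hz.pow 2).const_mul (δ ^ 2))).div hden ?_).congr_deriv ?_
  · simpa using hp.ne'
  · simp only [zero_smul, add_zero, zero_mul, Nat.cast_ofNat, Nat.add_one_sub_one, pow_one,
      Pi.pow_apply, Pi.add_apply, pairing, quadOverLinGrad, inner_smul_left, conj_trivial]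
    field_simp
    ring

theorem quadOverLin_add_pairing_grad_le {p p' : ℝ × EuclideanSpace ℝ (Fin d) × ℝ}
    (hp : 0 < p.1) (hp' : 0 < p'.1) :
    quadOverLin δ p + pairing (quadOverLinGrad δ p) (p' - p) ≤ quadOverLin δ p' := by
  obtain ⟨x, y, z⟩ := p
  obtain ⟨x', y', z'⟩ := p'
  have hy := perspective_sq_norm_tangent_le (x := x) (x' := x') hp hp' y y'
  have hz := perspective_sq_norm_tangent_le (x := x) (x' := x') hp hp' (δ * z) (δ * z')
  simp only [Real.norm_eq_abs, sq_abs, Real.inner_apply, smul_eq_mul] at hz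
  simp only [quadOverLin, quadOverLinGrad, pairing, Prod.mk_sub_mk]
  linear_combination hy + hz

theorem quadOverLin_add_pairing_grad_neg {p : ℝ × EuclideanSpace ℝ (Fin d) × ℝ} (hp : p.1 ≠ 0) :
    quadOverLin δ p + pairing (quadOverLinGrad δ p) (-p) = 0 := by
  obtain ⟨x, y, z⟩ := p
  simp only [quadOverLin, quadOverLinGrad, pairing, Prod.fst_neg, Prod.snd_neg, inner_neg_right,
    inner_smul_left, real_inner_self_eq_norm_sq, conj_trivial]
  field_simp
  ring

theorem eq_quadOverLinGrad_of_forall_add_pairing_le {p q : ℝ × EuclideanSpace ℝ (Fin d) × ℝ}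
    (hp : 0 < p.1)
    (hq : ∀ p', 0 < p'.1 → quadOverLin δ p + pairing q (p' - p) ≤ quadOverLin δ p') :
    q = quadOverLinGrad δ p := by
  refine forall_pairing_eq_iff.mp fun v => eq_of_hasDerivAt_of_eventually_add_mul_le
    (hasDerivAt_quadOverLin_line hp v) ?_
  have hpos : ∀ᶠ t : ℝ in 𝓝 0, 0 < (p + t • v).1 :=
    Tendsto.eventually_const_lt (by simpa using hp) (Continuous.tendsto (by fun_prop) 0)
  filter_upwards [hpos] with t ht
  simpa [pairing_smul_right] using hq _ ht

theorem subdiff_of_pos {p : ℝ × EuclideanSpace ℝ (Fin d) × ℝ} (hp : 0 < p.1) :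
    subdiff δ d p = {quadOverLinGrad δ p} := by
  ext q
  rw [mem_subdiff_iff (fEdelta_of_pos hp), Set.mem_singleton_iff]
  refine ⟨fun hq => eq_quadOverLinGrad_of_forall_add_pairing_le hp hq.1, ?_⟩
  rintro rfl
  exact ⟨fun p' hp' => quadOverLin_add_pairing_grad_le hp hp',
    (quadOverLin_add_pairing_grad_neg hp.ne').le⟩

theorem pairing_le_quadOverLin_of_mem_Bdelta (hδ : δ ≠ 0) {p q : ℝ × EuclideanSpace ℝ (Fin d) × ℝ}
    (hq : q ∈ Bdelta δ d) (hp : 0 < p.1) : pairing q p ≤ quadOverLin δ p := by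
  obtain ⟨a, b, c⟩ := q
  obtain ⟨x, y, z⟩ := p
  have hb := two_mul_mul_le_mul_sq_add_sq_div hp ‖b‖ ‖y‖
  have hc := two_mul_mul_le_mul_sq_add_sq_div hp (c / δ) (δ * z)
  have hby := real_inner_le_norm b y
  simp only [Bdelta, Set.mem_ofPred_eq] at hq
  simp only [pairing, quadOverLin]
  calc a * x + ⟪b, y⟫ + c * z
      ≤ a * x + (x * ‖b‖ ^ 2 + ‖y‖ ^ 2 / x) / 2 + (x * (c / δ) ^ 2 + (δ * z) ^ 2 / x) / 2 := by
        have hcz : c * z = c / δ * (δ * z) := by field_simp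
        linarith
    _ = x * (a + 1 / 2 * (‖b‖ ^ 2 + c ^ 2 / δ ^ 2)) + (‖y‖ ^ 2 + δ ^ 2 * z ^ 2) / (2 * x) := by
        field_simp
        ring
    _ ≤ (‖y‖ ^ 2 + δ ^ 2 * z ^ 2) / (2 * x) :=
        add_le_of_nonpos_left (mul_nonpos_of_nonneg_of_nonpos hp.le hq)

theorem subdiff_zero (hδ : δ ≠ 0) : subdiff δ d 0 = Bdelta δ d := by
  ext q
  simp only [mem_subdiff_iff fEdelta_zero, sub_zero, neg_zero, zero_add, pairing_zero_right,
    le_refl, and_true]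
  refine ⟨fun hq => ?_, fun hq p' hp' => pairing_le_quadOverLin_of_mem_Bdelta hδ hq hp'⟩
  obtain ⟨a, b, c⟩ := q
  have := hq (1, b, c / δ ^ 2) one_pos
  have hc : δ ^ 2 * (c / δ ^ 2) ^ 2 = c ^ 2 / δ ^ 2 := by field_simp
  simp only [pairing, quadOverLin, real_inner_self_eq_norm_sq, hc] at this
  simp only [Bdelta, Set.mem_ofPred_eq]
  linarith [show c * (c / δ ^ 2) = c ^ 2 / δ ^ 2 by ring]

end

/-- For `x > 0` the subdifferential of `f_δ` at `(x,y,z)` is the singleton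
`{(-(|y|²+δ²z²)/(2x²), y/x, δ²z/x)}`, and at `(0,0,0)` it equals `B_δ`. -/
theorem fdelta_subdiff (δ : ℝ) (hδ : 0 < δ) (d : ℕ)
    (x : ℝ) (y : EuclideanSpace ℝ (Fin d)) (z : ℝ) (hx : 0 < x) :
    subdiff δ d (x, y, z) =
        {(-(‖y‖ ^ 2 + δ ^ 2 * z ^ 2) / (2 * x ^ 2), (1 / x) • y, δ ^ 2 * z / x)} ∧
      subdiff δ d 0 = Bdelta δ d :=
  ⟨subdiff_of_pos hx, subdiff_zero hδ.ne'⟩
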